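/- Let X_1, X_2, ... be i.i.d. symmetric random variables with P(X_i=0)=0, V_j^2 = \sum_{i=1}^j X_i^2, and write a_{j+1}/(j+1) = E[X_{j+1}^4/V_{j+1}^4]. Then E[(\sum_{j=n}^{l} X_{j+1}^2/V_{j+1}^2)^2] \le (max_{n \le j \le l} |a_{j+1} - 1/(j+1)| + \sum_{j=n}^{l} 1/(j+1)) \cdot (\sum_{j=n}^{l} 1/(j+1)). -/

import Mathlib

/-!
For an i.i.d. sequence the law of `(X_{σ i})_i` does not depend on the injection `σ`
(both are the infinite product of copies of the law of `X_1`). Swapping `i ≤ m` with `m` fixes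
`V_m`, so `E[X_i²/V_m²]` does not depend on `i ≤ m`; since these ratios sum to `1` a.s.,
`E[X_m²/V_m²] = 1/m`. For `m < p` the same swap also fixes `X_p` and `V_p`, and summing over
`i ≤ m` gives `m · E[X_m²/V_m² · X_p²/V_p²] = E[X_p²/V_p²] = 1/p`. Expanding the square, the
off-diagonal terms are therefore `b_j b_k` with `b_j = 1/(j+1)`, and the diagonal ones are
`a_{j+1} b_j = b_j² + (a_{j+1} - b_j) b_j`.
-/

open MeasureTheory ProbabilityTheory Filter

noncomputable section

/-- Partial sums `S_m = X_1 + ... + X_m`. -/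
def S {Ω : Type*} (X : ℕ → Ω → ℝ) (m : ℕ) (ω : Ω) : ℝ := ∑ i ∈ Finset.Icc 1 m, X i ω

/-- `V_m^2 = X_1^2 + ... + X_m^2`. -/
def V2 {Ω : Type*} (X : ℕ → Ω → ℝ) (m : ℕ) (ω : Ω) : ℝ := ∑ i ∈ Finset.Icc 1 m, (X i ω)^2

/-- `V_m = (X_1^2 + ... + X_m^2)^{1/2}`. -/
def V {Ω : Type*} (X : ℕ → Ω → ℝ) (m : ℕ) (ω : Ω) : ℝ := Real.sqrt (V2 X m ω)

/-- Self-normalized sums `Y_m = S_m / V_m`. -/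
def Ysn {Ω : Type*} (X : ℕ → Ω → ℝ) (m : ℕ) (ω : Ω) : ℝ := S X m ω / V X m ω

/-- The `X i`, `i ≥ 1`, are i.i.d. -/
def IID {Ω : Type*} [MeasurableSpace Ω] (μ : Measure Ω) (X : ℕ → Ω → ℝ) : Prop :=
  iIndepFun X μ ∧ ∀ i, IdentDistrib (X i) (X 1) μ μ

/-- Each `X i` is symmetric (about 0) in distribution. -/
def SymmLaw {Ω : Type*} [MeasurableSpace Ω] (μ : Measure Ω) (X : ℕ → Ω → ℝ) : Prop :=
  ∀ i, Measure.map (X i) μ = Measure.map (fun ω => -X i ω) μ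

/-- Convergence in distribution of real random variables, tested against bounded
continuous functions. -/
def TendstoInDistr {Ω : Type*} [MeasurableSpace Ω] (μ : Measure Ω) (Z : ℕ → Ω → ℝ)
    (ν : Measure ℝ) : Prop :=
  ∀ f : BoundedContinuousFunction ℝ ℝ,
    Tendsto (fun n => ∫ ω, f (Z n ω) ∂μ) atTop (nhds (∫ x, f x ∂ν))

/-- `X` is in the domain of attraction of `N(0,1)`: for some norming constants `a_n > 0`
the normalized partial sums converge in distribution to the standard normal law. -/
def DAN {Ω : Type*} [MeasurableSpace Ω] (μ : Measure Ω) (X : ℕ → Ω → ℝ) : Prop :=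
  ∃ a : ℕ → ℝ, (∀ n, 0 < a n) ∧
    TendstoInDistr μ (fun n ω => S X n ω / a n) (gaussianReal 0 1)

open Finset

theorem Finset.sum_mul_le_sup'_abs_mul_sum {ι : Type*} {s : Finset ι} (H : s.Nonempty)
    (f g : ι → ℝ) (hg : ∀ i ∈ s, 0 ≤ g i) :
    ∑ i ∈ s, f i * g i ≤ s.sup' H (fun i => |f i|) * ∑ i ∈ s, g i := by
  rw [mul_sum]
  exact sum_le_sum fun i hi =>
    mul_le_mul_of_nonneg_right ((le_abs_self _).trans (le_sup' (fun i => |f i|) hi)) (hg i hi)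

theorem Finset.sum_sum_mul_add_ite {ι R : Type*} [CommSemiring R] [DecidableEq ι]
    (s : Finset ι) (b d : ι → R) :
    ∑ j ∈ s, ∑ k ∈ s, (b j * b k + if j = k then d j else 0) =
      (∑ j ∈ s, b j) ^ 2 + ∑ j ∈ s, d j := by
  simp only [sum_add_distrib, sq, sum_mul_sum]
  congr 1
  exact sum_congr rfl fun j hj => by rw [sum_ite_eq, if_pos hj]

section Integral

variable {Ω : Type*} [MeasurableSpace Ω] {μ : Measure Ω}

theorem integral_sq_finset_sum {ι : Type*} (s : Finset ι) {f : ι → Ω → ℝ}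
    (hf : ∀ i ∈ s, ∀ j ∈ s, Integrable (fun ω => f i ω * f j ω) μ) :
    ∫ ω, (∑ i ∈ s, f i ω) ^ 2 ∂μ = ∑ i ∈ s, ∑ j ∈ s, ∫ ω, f i ω * f j ω ∂μ := by
  simp_rw [sq, sum_mul_sum]
  rw [integral_finsetSum _ fun i hi => integrable_finsetSum _ (hf i hi)]
  exact sum_congr rfl fun i hi => integral_finsetSum _ (hf i hi)

theorem card_mul_integral_eq_integral_of_sum_ae_eq {ι : Type*} {s : Finset ι} {F : ι → Ω → ℝ}
    {g : Ω → ℝ} {i₀ : ι} (hF : ∀ i ∈ s, ∫ ω, F i ω ∂μ = ∫ ω, F i₀ ω ∂μ)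
    (hint : ∀ i ∈ s, Integrable (F i) μ) (hsum : ∀ᵐ ω ∂μ, ∑ i ∈ s, F i ω = g ω) :
    #s * ∫ ω, F i₀ ω ∂μ = ∫ ω, g ω ∂μ := by
  rw [← integral_congr_ae hsum, integral_finsetSum s hint, sum_congr rfl hF, sum_const,
    nsmul_eq_mul]

end Integral

namespace IID

variable {Ω : Type*} [MeasurableSpace Ω] {μ : Measure Ω} {X : ℕ → Ω → ℝ}

theorem map_comp_injective (hmeas : ∀ i, Measurable (X i)) (hiid : IID μ X) {f : ℕ → ℕ}
    (hf : Function.Injective f) :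
    μ.map (fun ω i => X (f i) ω) = μ.map (fun ω i => X i ω) := by
  have hlaw : ∀ i, μ.map (X i) = μ.map (X 1) := fun i => (hiid.2 i).map_eq
  rw [(hiid.1.precomp hf).map_fun_eq_infinitePi_map (fun i => hmeas (f i)),
    hiid.1.map_fun_eq_infinitePi_map hmeas]
  simp only [hlaw]

theorem integral_comp_injective (hmeas : ∀ i, Measurable (X i)) (hiid : IID μ X)
    {f : ℕ → ℕ} (hf : Function.Injective f) {G : (ℕ → ℝ) → ℝ} (hG : Measurable G) :
    ∫ ω, G (fun i => X (f i) ω) ∂μ = ∫ ω, G (fun i => X i ω) ∂μ := by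
  have hX : Measurable fun ω i => X i ω := measurable_pi_lambda _ hmeas
  have hXf : Measurable fun ω i => X (f i) ω := measurable_pi_lambda _ fun i => hmeas (f i)
  rw [← integral_map hXf.aemeasurable hG.aestronglyMeasurable,
    ← integral_map hX.aemeasurable hG.aestronglyMeasurable, map_comp_injective hmeas hiid hf]

end IID

theorem Equiv.setOf_swap_apply_ne_subset {α : Type*} [DecidableEq α] {s : Set α} {i m : α}
    (hi : i ∈ s) (hm : m ∈ s) : {t | Equiv.swap i m t ≠ t} ⊆ s := by
  intro t ht
  by_contra h
  exact ht (Equiv.swap_apply_of_ne_of_ne (fun e => h (e ▸ hi)) (fun e => h (e ▸ hm)))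

section SelfNormalized

variable {Ω : Type*} {X : ℕ → Ω → ℝ} {i m p : ℕ}

theorem V2_comp_perm {σ : Equiv.Perm ℕ} (hσ : {t | σ t ≠ t} ⊆ (Icc 1 m : Set ℕ)) (ω : Ω) :
    V2 (fun t => X (σ t)) m ω = V2 X m ω :=
  σ.sum_comp (Icc 1 m) (fun t => X t ω ^ 2) hσ

theorem sq_div_V2_nonneg (i m : ℕ) (ω : Ω) : 0 ≤ X i ω ^ 2 / V2 X m ω := by
  unfold V2
  positivity

theorem sq_le_V2 (hi : i ∈ Icc 1 m) (ω : Ω) : X i ω ^ 2 ≤ V2 X m ω :=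
  single_le_sum (f := fun t => X t ω ^ 2) (fun _ _ => sq_nonneg _) hi

theorem norm_sq_div_V2_le_one (hi : i ∈ Icc 1 m) (ω : Ω) : ‖X i ω ^ 2 / V2 X m ω‖ ≤ 1 := by
  rw [Real.norm_of_nonneg (sq_div_V2_nonneg i m ω)]
  exact div_le_one_of_le₀ (sq_le_V2 hi ω) ((sq_nonneg _).trans (sq_le_V2 hi ω))

theorem sum_sq_div_V2 {ω : Ω} (h : V2 X m ω ≠ 0) : ∑ i ∈ Icc 1 m, X i ω ^ 2 / V2 X m ω = 1 := by
  rw [← sum_div]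
  exact div_self h

variable [MeasurableSpace Ω] {μ : Measure Ω}

theorem ae_V2_ne_zero (hzero : μ {ω | X 1 ω = 0} = 0) (hm : 0 < m) :
    ∀ᵐ ω ∂μ, V2 X m ω ≠ 0 := by
  rw [ae_iff]
  refine measure_mono_null (fun ω (hω : ¬V2 X m ω ≠ 0) => ?_) hzero
  have hX1 := sq_le_V2 (X := X) (mem_Icc.2 ⟨le_rfl, hm⟩) ω
  rw [not_not.1 hω] at hX1
  exact pow_eq_zero_iff two_ne_zero |>.1 (le_antisymm hX1 (sq_nonneg _))

variable [IsFiniteMeasure μ] (hmeas : ∀ i, Measurable (X i))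
include hmeas

omit [IsFiniteMeasure μ] in
theorem measurable_sq_div_V2 (i m : ℕ) : Measurable fun ω => X i ω ^ 2 / V2 X m ω :=
  ((hmeas i).pow_const 2).div (Finset.measurable_sum _ fun t _ => (hmeas t).pow_const 2)

theorem integrable_sq_div_V2 (hi : i ∈ Icc 1 m) :
    Integrable (fun ω => X i ω ^ 2 / V2 X m ω) μ :=
  (integrable_const (1 : ℝ)).mono' (measurable_sq_div_V2 hmeas i m).aestronglyMeasurable
    (ae_of_all _ (norm_sq_div_V2_le_one hi))

theorem integrable_sq_div_V2_mul {j : ℕ} (hi : i ∈ Icc 1 m) (hj : j ∈ Icc 1 p) :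
    Integrable (fun ω => X i ω ^ 2 / V2 X m ω * (X j ω ^ 2 / V2 X p ω)) μ :=
  (integrable_sq_div_V2 hmeas hj).bdd_mul (measurable_sq_div_V2 hmeas i m).aestronglyMeasurable
    (ae_of_all _ (norm_sq_div_V2_le_one hi))

variable (hiid : IID μ X)
include hiid

omit [IsFiniteMeasure μ] in
theorem integral_sq_div_V2_eq (hi : i ∈ Icc 1 m) :
    ∫ ω, X i ω ^ 2 / V2 X m ω ∂μ = ∫ ω, X m ω ^ 2 / V2 X m ω ∂μ := by
  have hm : m ∈ Icc 1 m := mem_Icc.2 ⟨(mem_Icc.1 hi).1.trans (mem_Icc.1 hi).2, le_rfl⟩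
  have h := hiid.integral_comp_injective hmeas (Equiv.swap i m).injective
    (G := fun x => x m ^ 2 / ∑ t ∈ Icc 1 m, x t ^ 2) (by fun_prop)
  simp only [Equiv.swap_apply_right] at h
  calc ∫ ω, X i ω ^ 2 / V2 X m ω ∂μ
      = ∫ ω, X i ω ^ 2 / V2 (fun t => X (Equiv.swap i m t)) m ω ∂μ := by
        simp only [V2_comp_perm (Equiv.setOf_swap_apply_ne_subset (s := (Icc 1 m : Set ℕ)) hi hm)]
    _ = _ := h

omit [IsFiniteMeasure μ] in
theorem integral_sq_div_V2_mul_eq (hi : i ∈ Icc 1 m) (hmp : m < p) :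
    ∫ ω, X i ω ^ 2 / V2 X m ω * (X p ω ^ 2 / V2 X p ω) ∂μ =
      ∫ ω, X m ω ^ 2 / V2 X m ω * (X p ω ^ 2 / V2 X p ω) ∂μ := by
  obtain ⟨hi1, him⟩ := mem_Icc.1 hi
  have hσp : Equiv.swap i m p = p := Equiv.swap_apply_of_ne_of_ne (by omega) (by omega)
  have h := hiid.integral_comp_injective hmeas (Equiv.swap i m).injective
    (G := fun x => x m ^ 2 / (∑ t ∈ Icc 1 m, x t ^ 2) * (x p ^ 2 / ∑ t ∈ Icc 1 p, x t ^ 2))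
    (by fun_prop)
  simp only [Equiv.swap_apply_right, hσp] at h
  calc ∫ ω, X i ω ^ 2 / V2 X m ω * (X p ω ^ 2 / V2 X p ω) ∂μ
      = ∫ ω, X i ω ^ 2 / V2 (fun t => X (Equiv.swap i m t)) m ω *
          (X p ω ^ 2 / V2 (fun t => X (Equiv.swap i m t)) p ω) ∂μ := by
        simp only [V2_comp_perm (Equiv.setOf_swap_apply_ne_subset (s := (Icc 1 m : Set ℕ)) hi
            (mem_Icc.2 ⟨by omega, le_rfl⟩)),
          V2_comp_perm (Equiv.setOf_swap_apply_ne_subset (s := (Icc 1 p : Set ℕ))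
            (mem_Icc.2 ⟨hi1, by omega⟩) (mem_Icc.2 ⟨by omega, hmp.le⟩))]
    _ = _ := h

variable [IsProbabilityMeasure μ] (hzero : μ {ω | X 1 ω = 0} = 0)
include hzero

theorem integral_sq_div_V2 (hm : 0 < m) : ∫ ω, X m ω ^ 2 / V2 X m ω ∂μ = 1 / m := by
  have h := card_mul_integral_eq_integral_of_sum_ae_eq (s := Icc 1 m) (g := fun _ => 1)
    (F := fun i ω => X i ω ^ 2 / V2 X m ω)
    (fun i hi => integral_sq_div_V2_eq hmeas hiid hi) (fun i hi => integrable_sq_div_V2 hmeas hi)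
    ((ae_V2_ne_zero hzero hm).mono fun ω => sum_sq_div_V2)
  rw [Nat.card_Icc, Nat.add_sub_cancel, integral_const, probReal_univ, one_smul] at h
  rw [eq_div_iff (by positivity), mul_comm, h]

theorem integral_sq_div_V2_mul (hm : 0 < m) (hmp : m < p) :
    ∫ ω, X m ω ^ 2 / V2 X m ω * (X p ω ^ 2 / V2 X p ω) ∂μ = 1 / m * (1 / p) := by
  have h := card_mul_integral_eq_integral_of_sum_ae_eq (s := Icc 1 m)
    (F := fun i ω => X i ω ^ 2 / V2 X m ω * (X p ω ^ 2 / V2 X p ω))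
    (fun i hi => integral_sq_div_V2_mul_eq hmeas hiid hi hmp)
    (fun i hi => integrable_sq_div_V2_mul hmeas hi (mem_Icc.2 ⟨by omega, le_rfl⟩))
    ((ae_V2_ne_zero hzero hm).mono fun ω hω => by rw [← sum_mul, sum_sq_div_V2 hω, one_mul])
  rw [Nat.card_Icc, Nat.add_sub_cancel, integral_sq_div_V2 hmeas hiid hzero (hm.trans hmp)] at h
  rw [← h]
  field_simp

end SelfNormalized

theorem stmt14_general {Ω : Type*} [MeasurableSpace Ω] (μ : Measure Ω) [IsProbabilityMeasure μ]
    (X : ℕ → Ω → ℝ)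
    (hmeas : ∀ i, Measurable (X i))
    (hiid : IID μ X)
    (hzero : ∀ i, μ {ω | X i ω = 0} = 0)
    (a : ℕ → ℝ)
    (ha : ∀ j : ℕ, a (j+1) / ((j : ℝ) + 1) = ∫ ω, (X (j+1) ω)^4 / (V2 X (j+1) ω)^2 ∂μ)
    (n l : ℕ) (hnl : n ≤ l) :
    ∫ ω, (∑ j ∈ Finset.Icc n l, (X (j+1) ω)^2 / V2 X (j+1) ω)^2 ∂μ
      ≤ ((Finset.Icc n l).sup' (Finset.nonempty_Icc.mpr hnl)
            (fun j => |a (j+1) - 1 / ((j : ℝ) + 1)|)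
          + ∑ j ∈ Finset.Icc n l, (1 : ℝ) / ((j : ℝ) + 1))
        * ∑ j ∈ Finset.Icc n l, (1 : ℝ) / ((j : ℝ) + 1) := by
  set b : ℕ → ℝ := fun j => 1 / ((j : ℝ) + 1)
  have hmem (j : ℕ) : j + 1 ∈ Icc 1 (j + 1) := mem_Icc.2 ⟨by omega, le_rfl⟩
  have hmoment (j k : ℕ) :
      ∫ ω, X (j+1) ω ^ 2 / V2 X (j+1) ω * (X (k+1) ω ^ 2 / V2 X (k+1) ω) ∂μ =
        b j * b k + if j = k then (a (j+1) - b j) * b j else 0 := by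
    rcases lt_trichotomy j k with hjk | rfl | hjk
    · rw [if_neg hjk.ne, add_zero,
        integral_sq_div_V2_mul hmeas hiid (hzero 1) j.succ_pos (by omega)]
      push_cast
      rfl
    · have hsq (ω : Ω) : X (j+1) ω ^ 2 / V2 X (j+1) ω * (X (j+1) ω ^ 2 / V2 X (j+1) ω) =
          X (j+1) ω ^ 4 / V2 X (j+1) ω ^ 2 := by ring
      rw [if_pos rfl, integral_congr_ae (ae_of_all _ hsq), ← ha j]
      ring
    · rw [if_neg hjk.ne', add_zero, mul_comm (b j)]
      simp_rw [mul_comm (X (j+1) _ ^ 2 / _)]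
      rw [integral_sq_div_V2_mul hmeas hiid (hzero 1) k.succ_pos (by omega)]
      push_cast
      rfl
  calc ∫ ω, (∑ j ∈ Icc n l, X (j+1) ω ^ 2 / V2 X (j+1) ω) ^ 2 ∂μ
      = (∑ j ∈ Icc n l, b j) ^ 2 + ∑ j ∈ Icc n l, (a (j+1) - b j) * b j := by
        rw [integral_sq_finset_sum _ fun j _ k _ =>
          integrable_sq_div_V2_mul hmeas (hmem j) (hmem k)]
        simp only [hmoment, sum_sum_mul_add_ite]
    _ ≤ (∑ j ∈ Icc n l, b j) ^ 2 +
          (Icc n l).sup' (nonempty_Icc.mpr hnl) (fun j => |a (j+1) - b j|) *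
            ∑ j ∈ Icc n l, b j := by
        gcongr
        exact sum_mul_le_sup'_abs_mul_sum _ _ _ fun j _ => by positivity
    _ = _ := by ring

/-- Second-moment bound: writing `a_{j+1}/(j+1) = E[X_{j+1}^4/V_{j+1}^4]`,
`E[(∑_{j=n}^l X_{j+1}^2/V_{j+1}^2)^2]
  ≤ (max_{n ≤ j ≤ l} |a_{j+1} - 1/(j+1)| + ∑_{j=n}^l 1/(j+1)) ∑_{j=n}^l 1/(j+1)`. -/
theorem stmt14 {Ω : Type*} [MeasurableSpace Ω] (μ : Measure Ω) [IsProbabilityMeasure μ]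
    (X : ℕ → Ω → ℝ)
    (hmeas : ∀ i, Measurable (X i))
    (hiid : IID μ X)
    (hsymm : SymmLaw μ X)
    (hzero : ∀ i, μ {ω | X i ω = 0} = 0)
    (a : ℕ → ℝ)
    (ha : ∀ j : ℕ, a (j+1) / ((j : ℝ) + 1) = ∫ ω, (X (j+1) ω)^4 / (V2 X (j+1) ω)^2 ∂μ)
    (n l : ℕ) (hnl : n ≤ l) :
    ∫ ω, (∑ j ∈ Finset.Icc n l, (X (j+1) ω)^2 / V2 X (j+1) ω)^2 ∂μ
      ≤ ((Finset.Icc n l).sup' (Finset.nonempty_Icc.mpr hnl)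
            (fun j => |a (j+1) - 1 / ((j : ℝ) + 1)|)
          + ∑ j ∈ Finset.Icc n l, (1 : ℝ) / ((j : ℝ) + 1))
        * ∑ j ∈ Finset.Icc n l, (1 : ℝ) / ((j : ℝ) + 1) :=
  stmt14_general μ X hmeas hiid hzero a ha n l hnl
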